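/- Let Δ be an irreducible root system with dual Coxeter number h*. For every long simple root α, one has q_α ≤ h*, with equality if and only if ϖ_α is cominuscule (i.e., the coefficient of α in the highest root θ equals 1). -/
import Mathlib


open scoped RealInnerProductSpace
open scoped Classical

/-- An (irreducible, reduced, crystallographic) root system in a real inner product
space `V`, together with a choice of base (simple roots), coordinate functions with
respect to the base, and fundamental weights. -/
structure RootSystemData (V : Type*) [NormedAddCommGroup V] [InnerProductSpace ℝ V] where
  Δ : Finset V
  base : Finset V
  base_sub : base ⊆ Δ
  root_ne_zero : ∀ γ ∈ Δ, γ ≠ 0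
  span_eq_top : Submodule.span ℝ (Δ : Set V) = ⊤
  reflect_mem : ∀ γ ∈ Δ, ∀ δ ∈ Δ, δ - (2 * ⟪δ, γ⟫ / ⟪γ, γ⟫) • γ ∈ Δ
  crystallographic : ∀ γ ∈ Δ, ∀ δ ∈ Δ, ∃ k : ℤ, 2 * ⟪δ, γ⟫ / ⟪γ, γ⟫ = (k : ℝ)
  reduced : ∀ γ ∈ Δ, (2 : ℝ) • γ ∉ Δ
  coord : V → V → ℝ
  coord_add : ∀ α x y, coord (x + y) α = coord x α + coord y α
  coord_smul : ∀ α (c : ℝ) (x : V), coord (c • x) α = c * coord x α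
  coord_base : ∀ α ∈ base, ∀ β ∈ base, coord β α = if β = α then 1 else 0
  root_decomp : ∀ γ ∈ Δ, γ = ∑ α ∈ base, coord γ α • α
  pos_or_neg : ∀ γ ∈ Δ, (∀ α ∈ base, 0 ≤ coord γ α) ∨ (∀ α ∈ base, coord γ α ≤ 0)
  coord_int : ∀ γ ∈ Δ, ∀ α ∈ base, ∃ k : ℤ, coord γ α = (k : ℝ)
  irreducible : ∀ S ⊆ Δ, S.Nonempty →
    (∀ γ ∈ S, ∀ δ ∈ Δ, δ ∉ S → ⟪γ, δ⟫ = 0) → S = Δ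
  fw : V → V
  fw_spec : ∀ α ∈ base, ∀ β ∈ base, ⟪fw α, β⟫ = if β = α then ⟪α, α⟫ / 2 else 0

namespace RootSystemData

variable {V : Type*} [NormedAddCommGroup V] [InnerProductSpace ℝ V]

/-- The set of positive roots (nonnegative coordinates w.r.t. the base). -/
noncomputable def posRoots (R : RootSystemData V) : Finset V :=
  R.Δ.filter fun γ => ∀ α ∈ R.base, 0 ≤ R.coord γ α

/-- The height of a root: the sum of its coordinates in the base. -/
noncomputable def ht (R : RootSystemData V) (γ : V) : ℝ :=
  ∑ α ∈ R.base, R.coord γ α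

/-- The height of the coroot `γ^∨` in the dual root system. -/
noncomputable def dualHt (R : RootSystemData V) (γ : V) : ℝ :=
  ∑ α ∈ R.base, R.coord γ α * ⟪α, α⟫ / ⟪γ, γ⟫

/-- `R_α`: the set of roots having positive inner product with the fundamental
weight `ϖ_α`. -/
noncomputable def Rset (R : RootSystemData V) (α : V) : Finset V :=
  R.Δ.filter fun γ => 0 < ⟪γ, R.fw α⟫

/-- `Δ_α(i)`: the set of roots whose coefficient of `α` equals `i`. -/
noncomputable def level (R : RootSystemData V) (α : V) (i : ℤ) : Finset V :=
  R.Δ.filter fun γ => R.coord γ α = (i : ℝ)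

end RootSystemData
namespace RootSystemData

variable {V : Type*} [NormedAddCommGroup V] [InnerProductSpace ℝ V] (R : RootSystemData V)

lemma coord_zero' (β : V) : R.coord 0 β = 0 := by
  have h := R.coord_smul β 0 0
  simpa using h

lemma coord_sum' {ι : Type*} (s : Finset ι) (g : ι → V) (β : V) :
    R.coord (∑ i ∈ s, g i) β = ∑ i ∈ s, R.coord (g i) β := by
  classical
  induction s using Finset.cons_induction with
  | empty => simpa using R.coord_zero' β
  | cons a s ha ih => rw [Finset.sum_cons, Finset.sum_cons, R.coord_add, ih]

lemma coord_sub' (x y β : V) : R.coord (x - y) β = R.coord x β - R.coord y β := by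
  have h1 := R.coord_add β (x - y) y
  simp only [sub_add_cancel] at h1
  linarith

lemma coord_smul_sub (x : V) (c : ℝ) (y β : V) :
    R.coord (x - c • y) β = R.coord x β - c * R.coord y β := by
  rw [R.coord_sub', R.coord_smul]

lemma inner_self_pos' {γ : V} (hγ : γ ∈ R.Δ) : 0 < ⟪γ, γ⟫ :=
  lt_of_le_of_ne real_inner_self_nonneg
    (Ne.symm (inner_self_ne_zero.mpr (R.root_ne_zero γ hγ)))

lemma neg_mem' {γ : V} (hγ : γ ∈ R.Δ) : -γ ∈ R.Δ := by
  have h := R.reflect_mem γ hγ γ hγ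
  have hne : ⟪γ, γ⟫ ≠ 0 := (R.inner_self_pos' hγ).ne'
  have h2 : 2 * ⟪γ, γ⟫ / ⟪γ, γ⟫ = 2 := by field_simp
  rw [h2] at h
  have h3 : γ - (2:ℝ) • γ = -γ := by module
  rwa [h3] at h

lemma inner_root_eq_sum (x : V) {γ : V} (hγ : γ ∈ R.Δ) :
    ⟪x, γ⟫ = ∑ β ∈ R.base, R.coord γ β * ⟪x, β⟫ := by
  conv_lhs => rw [R.root_decomp γ hγ]
  rw [inner_sum]
  exact Finset.sum_congr rfl fun β _ => real_inner_smul_right ..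

lemma root_eq_of_coord {γ δ : V} (hγ : γ ∈ R.Δ) (hδ : δ ∈ R.Δ)
    (h : ∀ β ∈ R.base, R.coord γ β = R.coord δ β) : γ = δ := by
  rw [R.root_decomp γ hγ, R.root_decomp δ hδ]
  exact Finset.sum_congr rfl fun β hβ => by rw [h β hβ]

lemma root_ne_zero_coord {γ : V} (hγ : γ ∈ R.Δ) (h : ∀ β ∈ R.base, R.coord γ β = 0) :
    False := by
  apply R.root_ne_zero γ hγ
  rw [R.root_decomp γ hγ]
  exact Finset.sum_eq_zero fun β hβ => by rw [h β hβ, zero_smul]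

lemma pos_of_coord_pos {γ : V} (hγ : γ ∈ R.Δ) {β : V} (hβ : β ∈ R.base)
    (h : 0 < R.coord γ β) : γ ∈ R.posRoots := by
  rw [posRoots, Finset.mem_filter]
  refine ⟨hγ, ?_⟩
  rcases R.pos_or_neg γ hγ with h1 | h1
  · exact h1
  · exact absurd (h1 β hβ) (not_le.mpr h)

lemma mem_posRoots {γ : V} : γ ∈ R.posRoots ↔ γ ∈ R.Δ ∧ ∀ β ∈ R.base, 0 ≤ R.coord γ β := by
  rw [posRoots, Finset.mem_filter]

lemma inner_fw {γ : V} (hγ : γ ∈ R.Δ) {α : V} (hα : α ∈ R.base) :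
    ⟪γ, R.fw α⟫ = R.coord γ α * (⟪α, α⟫ / 2) := by
  rw [real_inner_comm, R.inner_root_eq_sum (R.fw α) hγ]
  rw [Finset.sum_eq_single α]
  · rw [R.fw_spec α hα α hα, if_pos rfl]
  · intro β hβ hne
    rw [R.fw_spec α hα β hβ, if_neg hne, mul_zero]
  · intro h; exact absurd hα h

end RootSystemData
namespace RootSystemData

variable {V : Type*} [NormedAddCommGroup V] [InnerProductSpace ℝ V] (R : RootSystemData V)

/-- `nv θ γ = ⟨γ, θ^∨⟩`. -/
noncomputable def nv (θ γ : V) : ℝ := 2 * ⟪γ, θ⟫ / ⟪θ, θ⟫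

section Theta

variable {θ : V} (hθ : θ ∈ R.Δ)
  (hθmax : ∀ γ ∈ R.Δ, ∀ β ∈ R.base, R.coord γ β ≤ R.coord θ β)



include hθmax in
lemma one_le_coord_theta {β : V} (hβ : β ∈ R.base) : 1 ≤ R.coord θ β := by
  have h := hθmax β (R.base_sub hβ) β hβ
  rwa [R.coord_base β hβ β hβ, if_pos rfl] at h

include hθ in
lemma nv_int (γ : V) (hγ : γ ∈ R.Δ) : ∃ k : ℤ, nv θ γ = (k : ℝ) :=
  R.crystallographic θ hθ γ hγ

include hθ in
lemma nv_theta : nv θ θ = 2 := by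
  have := (R.inner_self_pos' hθ).ne'
  rw [nv]; field_simp

include hθ in
lemma reflect_theta {γ : V} (hγ : γ ∈ R.Δ) : γ - nv θ γ • θ ∈ R.Δ :=
  R.reflect_mem θ hθ γ hγ

include hθ hθmax in
lemma nv_mem_01 {γ : V} (hγ : γ ∈ R.posRoots) (hγθ : γ ≠ θ) :
    nv θ γ = 0 ∨ nv θ γ = 1 := by
  obtain ⟨hγΔ, hγpos⟩ := R.mem_posRoots.mp hγ
  obtain ⟨k, hk⟩ := R.nv_int hθ γ hγΔ
  have hs : γ - (k : ℝ) • θ ∈ R.Δ := hk ▸ R.reflect_theta hθ hγΔ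
  have hcs : ∀ β ∈ R.base, R.coord (γ - (k:ℝ) • θ) β = R.coord γ β - k * R.coord θ β :=
    fun β _ => R.coord_smul_sub γ (k:ℝ) θ β
  rcases lt_trichotomy k 0 with hneg | h0 | hposk
  · -- k ≤ -1 : impossible
    exfalso
    have hk1' : k ≤ -1 := by omega
    have hk1 : (k : ℝ) ≤ -1 := by exact_mod_cast hk1'
    apply R.root_ne_zero_coord hγΔ
    intro β hβ
    have h1 := hθmax _ hs β hβ
    rw [hcs β hβ] at h1
    have h2 := R.one_le_coord_theta hθmax hβ
    have h3 := hγpos β hβ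
    nlinarith
  · left; rw [hk, h0]; norm_num
  · rcases eq_or_lt_of_le (by exact_mod_cast hposk : (1:ℤ) ≤ k) with h1 | h2
    · right; rw [hk, ← h1]; norm_num
    · -- k ≥ 2 : forces γ = θ, contradiction
      exfalso
      have hk2 : (2 : ℝ) ≤ (k : ℝ) := by exact_mod_cast h2
      have hns : -(γ - (k:ℝ) • θ) ∈ R.Δ := R.neg_mem' hs
      have hcoordeq : ∀ β ∈ R.base, R.coord γ β = R.coord θ β := by
        intro β hβ
        have h1 := hθmax _ hns β hβ
        have hrw : R.coord (-(γ - (k:ℝ) • θ)) β = -(R.coord γ β - k * R.coord θ β) := by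
          have := R.coord_smul β (-1) (γ - (k:ℝ) • θ)
          simp only [neg_smul, one_smul] at this
          rw [this, hcs β hβ]; ring
        rw [hrw] at h1
        have h2 := R.one_le_coord_theta hθmax hβ
        have h3 := hθmax γ hγΔ β hβ
        nlinarith
      exact hγθ (R.root_eq_of_coord hγΔ hθ hcoordeq)

include hθ in
lemma theta_sub_mem {γ : V} (hγ : γ ∈ R.Δ) (hnv : nv θ γ = 1) : θ - γ ∈ R.Δ := by
  have hs : γ - nv θ γ • θ ∈ R.Δ := R.reflect_theta hθ hγ
  rw [hnv, one_smul] at hs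
  have := R.neg_mem' hs
  rwa [neg_sub] at this

include hθ in
lemma nv_theta_sub {γ : V} : nv θ (θ - γ) = 2 - nv θ γ := by
  have hne := (R.inner_self_pos' hθ).ne'
  rw [nv, nv, inner_sub_left]
  field_simp

lemma coord_theta_sub (γ : V) (β : V) :
    R.coord (θ - γ) β = R.coord θ β - R.coord γ β := R.coord_sub' θ γ β

end Theta

end RootSystemData
namespace RootSystemData

variable {V : Type*} [NormedAddCommGroup V] [InnerProductSpace ℝ V] (R : RootSystemData V)

lemma base_mem_posRoots {β : V} (hβ : β ∈ R.base) : β ∈ R.posRoots := by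
  refine R.mem_posRoots.mpr ⟨R.base_sub hβ, fun β' hβ' => ?_⟩
  rw [R.coord_base β' hβ' β hβ]
  split <;> norm_num

/-- A positive root other than a simple root `β` has a positive coordinate away
from `β`. -/
lemma exists_other_coord {β : V} (hβ : β ∈ R.base) {γ : V} (hγ : γ ∈ R.posRoots)
    (hγβ : γ ≠ β) : ∃ β' ∈ R.base, β' ≠ β ∧ 0 < R.coord γ β' := by
  obtain ⟨hγΔ, hγpos⟩ := R.mem_posRoots.mp hγ
  by_contra hcon
  push_neg at hcon
  have hzero : ∀ β' ∈ R.base, β' ≠ β → R.coord γ β' = 0 := fun β' h1 h2 =>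
    le_antisymm (hcon β' h1 h2) (hγpos β' h1)
  -- γ = c • β with c = coord γ β
  have hγeq : γ = R.coord γ β • β := by
    conv_lhs => rw [R.root_decomp γ hγΔ]
    exact Finset.sum_eq_single β (fun β' h1 h2 => by rw [hzero β' h1 h2, zero_smul])
      (fun h => absurd hβ h)
  obtain ⟨n, hn⟩ := R.coord_int γ hγΔ β hβ
  have hn0 : 0 ≤ n := by
    have := hγpos β hβ; rw [hn] at this; exact_mod_cast this
  have hn1 : n ≠ 0 := by
    rintro rfl
    apply R.root_ne_zero γ hγΔ
    rw [hγeq, hn]; norm_num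
  have hn2 : n ≠ 1 := by
    rintro rfl
    apply hγβ
    rw [hγeq, hn]; norm_num
  have hn3 : 2 ≤ n := by omega
  -- crystallographic condition forces n = 2
  obtain ⟨k, hk⟩ := R.crystallographic γ hγΔ β (R.base_sub hβ)
  have hββ : (0:ℝ) < ⟪β, β⟫ := R.inner_self_pos' (R.base_sub hβ)
  have hγγ : ⟪γ, γ⟫ = (n:ℝ)^2 * ⟪β, β⟫ := by
    rw [hγeq, hn, real_inner_smul_left, real_inner_smul_right]; ring
  have hβγ : ⟪β, γ⟫ = (n:ℝ) * ⟪β, β⟫ := by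
    rw [hγeq, hn, real_inner_smul_right]
  have hnR : (0:ℝ) < (n:ℝ) := by exact_mod_cast (by omega : 0 < n)
  have hk' : (k:ℝ) = 2 / n := by
    rw [← hk, hβγ, hγγ]
    rw [div_eq_div_iff (by positivity) hnR.ne']
    ring
  have hkval : (k:ℝ) * n = 2 := by rw [hk']; field_simp
  have hkn : k * n = 2 := by exact_mod_cast hkval
  have hdvd : n ∣ 2 := ⟨k, by rw [← hkn]; ring⟩
  have hn4 : n = 2 := by
    have := Int.le_of_dvd (by norm_num) hdvd
    omega
  have : γ = (2:ℝ) • β := by rw [hγeq, hn, hn4]; norm_num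
  exact R.reduced β (R.base_sub hβ) (this ▸ hγΔ)

end RootSystemData
namespace RootSystemData

variable {V : Type*} [NormedAddCommGroup V] [InnerProductSpace ℝ V] (R : RootSystemData V)

lemma sum_posRoots_inner {β : V} (hβ : β ∈ R.base) :
    ⟪∑ γ ∈ R.posRoots, γ, β⟫ = ⟪β, β⟫ := by
  classical
  have hβΔ : β ∈ R.Δ := R.base_sub hβ
  have hββ : (0:ℝ) < ⟪β, β⟫ := R.inner_self_pos' hβΔ
  have hbb : ⟪β, β⟫ ≠ 0 := hββ.ne'
  set σ : V → V := fun γ => γ - (2 * ⟪γ, β⟫ / ⟪β, β⟫) • β with hσdef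
  have hσ : ∀ γ : V, σ γ = γ - (2 * ⟪γ, β⟫ / ⟪β, β⟫) • β := fun γ => rfl
  have hσmem : ∀ γ ∈ R.Δ, σ γ ∈ R.Δ := fun γ hγ => R.reflect_mem β hβΔ γ hγ
  have hσinv : ∀ γ : V, σ (σ γ) = γ := by
    intro γ
    rw [hσ, hσ]
    rw [inner_sub_left, real_inner_smul_left]
    have h1 : 2 * (⟪γ,β⟫ - 2 * ⟪γ, β⟫ / ⟪β, β⟫ * ⟪β,β⟫) / ⟪β,β⟫
        = -(2 * ⟪γ, β⟫ / ⟪β, β⟫) := by field_simp; ring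
    rw [h1]
    module
  have hcoordσ : ∀ (γ : V) (β' : V), β' ∈ R.base → β' ≠ β →
      R.coord (σ γ) β' = R.coord γ β' := by
    intro γ β' hβ' hβ'β
    rw [hσ, R.coord_smul_sub, R.coord_base β' hβ' β hβ, if_neg hβ'β.symm, mul_zero, sub_zero]
  have key : ∀ γ ∈ R.posRoots.erase β, σ γ ∈ R.posRoots.erase β := by
    intro γ hγe
    obtain ⟨hγβ, hγ⟩ := Finset.mem_erase.mp hγe
    obtain ⟨β', hβ', hβ'β, hβ'pos⟩ := R.exists_other_coord hβ hγ hγβ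
    have hγΔ := (R.mem_posRoots.mp hγ).1
    have hσΔ : σ γ ∈ R.Δ := hσmem γ hγΔ
    have hc := hcoordσ γ β' hβ' hβ'β
    have hσpos : σ γ ∈ R.posRoots := R.pos_of_coord_pos hσΔ hβ' (by rw [hc]; exact hβ'pos)
    refine Finset.mem_erase.mpr ⟨fun heq => ?_, hσpos⟩
    have h2 : R.coord β β' = R.coord γ β' := by rw [← heq, hc]
    rw [R.coord_base β' hβ' β hβ, if_neg hβ'β.symm] at h2
    linarith
  have hβpos : β ∈ R.posRoots := R.base_mem_posRoots hβ
  -- reindex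
  have hsum1 : ∑ γ ∈ R.posRoots.erase β, σ γ = ∑ γ ∈ R.posRoots.erase β, γ :=
    Finset.sum_nbij' σ σ key key (fun γ _ => hσinv γ) (fun γ _ => hσinv γ) (fun γ _ => rfl)
  have hsplit : ∑ γ ∈ R.posRoots, σ γ = σ β + ∑ γ ∈ R.posRoots.erase β, σ γ :=
    (Finset.add_sum_erase _ σ hβpos).symm
  have hsplit2 : ∑ γ ∈ R.posRoots, γ = β + ∑ γ ∈ R.posRoots.erase β, γ :=
    (Finset.add_sum_erase _ (fun γ => γ) hβpos).symm
  have hσβ : σ β = -β := by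
    rw [hσ]
    have h2 : 2 * ⟪β, β⟫ / ⟪β, β⟫ = 2 := by field_simp
    rw [h2]; module
  have hway1 : ∑ γ ∈ R.posRoots, σ γ
      = (∑ γ ∈ R.posRoots, γ) - (2 * ⟪∑ γ ∈ R.posRoots, γ, β⟫ / ⟪β, β⟫) • β := by
    rw [Finset.sum_sub_distrib, ← Finset.sum_smul, sum_inner]
    congr 2
    rw [Finset.mul_sum, Finset.sum_div]
  have hway2 : ∑ γ ∈ R.posRoots, σ γ = (∑ γ ∈ R.posRoots, γ) - (2:ℝ) • β := by
    rw [hsplit, hσβ, hsum1, hsplit2]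
    module
  have hfinal : (2 * ⟪∑ γ ∈ R.posRoots, γ, β⟫ / ⟪β, β⟫) • β = (2:ℝ) • β := by
    have h4 := hway1.symm.trans hway2
    have h5 : (2 * ⟪∑ γ ∈ R.posRoots, γ, β⟫ / ⟪β, β⟫) • β - (2:ℝ) • β = 0 := by
      rw [← sub_sub_sub_cancel_left _ _ (∑ γ ∈ R.posRoots, γ), h4, sub_self]
    rw [sub_eq_zero] at h5
    exact h5
  have hc : 2 * ⟪∑ γ ∈ R.posRoots, γ, β⟫ / ⟪β, β⟫ = 2 := by
    have h5 : (2 * ⟪∑ γ ∈ R.posRoots, γ, β⟫ / ⟪β, β⟫ - 2) • β = 0 := by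
      rw [sub_smul, hfinal, sub_self]
    rcases smul_eq_zero.mp h5 with h6 | h6
    · linarith [h6]
    · exact absurd h6 (R.root_ne_zero β hβΔ)
  field_simp at hc
  linarith

end RootSystemData
namespace RootSystemData

variable {V : Type*} [NormedAddCommGroup V] [InnerProductSpace ℝ V] (R : RootSystemData V)

section Count

variable {θ : V} (hθ : θ ∈ R.Δ)
  (hθmax : ∀ γ ∈ R.Δ, ∀ β ∈ R.base, R.coord γ β ≤ R.coord θ β)

include hθ hθmax in
lemma theta_mem_posRoots : θ ∈ R.posRoots :=
  R.mem_posRoots.mpr ⟨hθ, fun β hβ => le_trans zero_le_one (R.one_le_coord_theta hθmax hβ)⟩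

include hθ hθmax in
lemma sum_nv_eq (s : Finset V) (hs : s ⊆ R.posRoots) (hθs : θ ∈ s) :
    ∑ γ ∈ s, nv θ γ = 2 + ((s.filter fun γ => nv θ γ = 1).card : ℝ) := by
  classical
  rw [← Finset.add_sum_erase _ _ hθs, nv_theta R hθ]
  congr 1
  have hpt : ∀ γ ∈ s.erase θ, nv θ γ = (if nv θ γ = 1 then (1:ℝ) else 0) := by
    intro γ hγ
    obtain ⟨hγθ, hγs⟩ := Finset.mem_erase.mp hγ
    rcases R.nv_mem_01 hθ hθmax (hs hγs) hγθ with h | h <;> rw [h] <;> norm_num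
  rw [Finset.sum_congr rfl hpt, Finset.sum_boole, Finset.filter_erase]
  congr 1
  rw [Finset.erase_eq_of_notMem]
  intro hmem
  have := (Finset.mem_filter.mp hmem).2
  rw [nv_theta R hθ] at this
  norm_num at this

include hθ hθmax in
lemma sum_nv_posRoots : ∑ γ ∈ R.posRoots, nv θ γ = 2 * R.dualHt θ := by
  have hT : ⟪∑ γ ∈ R.posRoots, γ, θ⟫ = ∑ β ∈ R.base, R.coord θ β * ⟪β, β⟫ := by
    rw [R.inner_root_eq_sum _ hθ]
    exact Finset.sum_congr rfl fun β hβ => by rw [R.sum_posRoots_inner hβ]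
  have h1 : ∑ γ ∈ R.posRoots, nv θ γ = 2 * ⟪∑ γ ∈ R.posRoots, γ, θ⟫ / ⟪θ, θ⟫ := by
    rw [sum_inner, Finset.mul_sum, Finset.sum_div]
    rfl
  rw [h1, hT, dualHt, Finset.mul_sum, Finset.sum_div, Finset.mul_sum]
  exact Finset.sum_congr rfl fun β _ => by ring

end Count

section RsetFacts

variable {α : V} (hα : α ∈ R.base)

include hα in
lemma mem_Rset_iff {γ : V} : γ ∈ R.Rset α ↔ γ ∈ R.Δ ∧ 0 < R.coord γ α := by
  rw [Rset, Finset.mem_filter]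
  constructor
  · rintro ⟨h1, h2⟩
    refine ⟨h1, ?_⟩
    rw [R.inner_fw h1 hα] at h2
    have := R.inner_self_pos' (R.base_sub hα)
    nlinarith
  · rintro ⟨h1, h2⟩
    refine ⟨h1, ?_⟩
    rw [R.inner_fw h1 hα]
    have := R.inner_self_pos' (R.base_sub hα)
    positivity

include hα in
lemma Rset_subset_posRoots : R.Rset α ⊆ R.posRoots := by
  intro γ hγ
  obtain ⟨h1, h2⟩ := (R.mem_Rset_iff hα).mp hγ
  exact R.pos_of_coord_pos h1 hα h2

end RsetFacts

end RootSystemData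
/-- For every long simple root `α` one has `q_α ≤ h*` (the dual
Coxeter number), with equality iff `ϖ_α` is cominuscule, i.e. the coefficient of `α`
in the highest root `θ` equals `1`. -/
theorem q_le_dualCoxeter_and_cominuscule_iff
    {V : Type*} [NormedAddCommGroup V] [InnerProductSpace ℝ V]
    (R : RootSystemData V) (α : V) (hα : α ∈ R.base)
    (θ : V) (hθ : θ ∈ R.Δ)
    (hθmax : ∀ γ ∈ R.Δ, ∀ β ∈ R.base, R.coord γ β ≤ R.coord θ β)
    (hlong : ⟪α, α⟫ = ⟪θ, θ⟫)
    (q : ℕ) (hq : (∑ γ ∈ R.Rset α, γ) = (q : ℝ) • R.fw α) :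
    (q : ℝ) ≤ R.dualHt θ + 1 ∧
    ((q : ℝ) = R.dualHt θ + 1 ↔ R.coord θ α = 1) := by
  classical
  open RootSystemData in
  set D := R.dualHt θ with hD
  have hθθ : (0:ℝ) < ⟪θ, θ⟫ := R.inner_self_pos' hθ
  have hm1 : 1 ≤ R.coord θ α := R.one_le_coord_theta hθmax hα
  obtain ⟨km, hkm⟩ := R.coord_int θ hθ α hα
  have hkm1 : 1 ≤ km := by rw [hkm] at hm1; exact_mod_cast hm1
  have hθR : θ ∈ R.Rset α := (R.mem_Rset_iff hα).mpr ⟨hθ, by linarith⟩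
  have hRsub : R.Rset α ⊆ R.posRoots := R.Rset_subset_posRoots hα
  set P1 := R.posRoots.filter (fun γ => nv θ γ = 1) with hP1
  set Q1 := (R.Rset α).filter (fun γ => nv θ γ = 1) with hQ1
  -- card of P1
  have hP1card : (P1.card : ℝ) = 2 * D - 2 := by
    have h1 := R.sum_nv_eq hθ hθmax R.posRoots (Finset.Subset.refl _)
      (R.theta_mem_posRoots hθ hθmax)
    have h2 := R.sum_nv_posRoots hθ hθmax
    rw [h1] at h2
    rw [hP1, hD]
    linarith
  -- q * m = 2 + card Q1
  have hqm : (q : ℝ) * R.coord θ α = 2 + (Q1.card : ℝ) := by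
    have hpair : ⟪∑ γ ∈ R.Rset α, γ, θ⟫ = (q:ℝ) * (R.coord θ α * (⟪θ, θ⟫ / 2)) := by
      rw [hq, real_inner_smul_left, real_inner_comm, R.inner_fw hθ hα, hlong]
    have hsum : ∑ γ ∈ R.Rset α, nv θ γ = 2 * ⟪∑ γ ∈ R.Rset α, γ, θ⟫ / ⟪θ, θ⟫ := by
      rw [sum_inner, Finset.mul_sum, Finset.sum_div]
      rfl
    have h3 := R.sum_nv_eq hθ hθmax (R.Rset α) hRsub hθR
    rw [hsum, hpair] at h3
    rw [← hQ1] at h3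
    have h5 : 2 * ((q:ℝ) * (R.coord θ α * (⟪θ,θ⟫/2))) / ⟪θ,θ⟫ = (q:ℝ) * R.coord θ α := by
      field_simp
    rw [h5] at h3
    exact h3
  have hQP : Q1 ⊆ P1 := by
    intro γ hγ
    obtain ⟨h1, h2⟩ := Finset.mem_filter.mp hγ
    exact Finset.mem_filter.mpr ⟨hRsub h1, h2⟩
  have hQleP : (Q1.card : ℝ) ≤ (P1.card : ℝ) := by
    exact_mod_cast Finset.card_le_card hQP
  have hD1 : 1 ≤ D := by
    have : (0:ℝ) ≤ (P1.card : ℝ) := Nat.cast_nonneg _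
    linarith
  -- the case m = 1: exact equality
  have hcase1 : R.coord θ α = 1 → (q : ℝ) = D + 1 := by
    intro hm
    -- bijection between Q1 and P1 \ Rset
    set B := P1.filter (fun γ => γ ∉ R.Rset α) with hB
    have hAB : Q1.card = B.card := by
      apply Finset.card_nbij' (fun γ => θ - γ) (fun γ => θ - γ)
      · -- Q1 → B
        intro γ hγ
        obtain ⟨hγR, hγnv⟩ := Finset.mem_filter.mp hγ
        obtain ⟨hγΔ, hγα⟩ := (R.mem_Rset_iff hα).mp hγR
        have hsΔ : θ - γ ∈ R.Δ := R.theta_sub_mem hθ hγΔ hγnv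
        have hsnv : nv θ (θ - γ) = 1 := by rw [nv_theta_sub R hθ, hγnv]; norm_num
        have hspos : θ - γ ∈ R.posRoots := by
          refine R.mem_posRoots.mpr ⟨hsΔ, fun β hβ => ?_⟩
          rw [R.coord_theta_sub]
          have := hθmax γ hγΔ β hβ
          linarith
        obtain ⟨kγ, hkγ⟩ := R.coord_int γ hγΔ α hα
        have hkγ1 : 1 ≤ kγ := by
          rw [hkγ] at hγα; exact_mod_cast hγα
        have hsα : R.coord (θ - γ) α ≤ 0 := by
          rw [R.coord_theta_sub, hm, hkγ]
          have : (1:ℝ) ≤ (kγ:ℝ) := by exact_mod_cast hkγ1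
          linarith
        refine Finset.mem_filter.mpr ⟨Finset.mem_filter.mpr ⟨hspos, hsnv⟩, fun hmem => ?_⟩
        have := ((R.mem_Rset_iff hα).mp hmem).2
        linarith
      · -- B → Q1
        intro γ hγ
        obtain ⟨hγP1, hγnR⟩ := Finset.mem_filter.mp hγ
        obtain ⟨hγpos, hγnv⟩ := Finset.mem_filter.mp hγP1
        obtain ⟨hγΔ, hγge⟩ := R.mem_posRoots.mp hγpos
        have hγα0 : R.coord γ α = 0 := by
          rcases lt_or_eq_of_le (hγge α hα) with h | h
          · exact absurd ((R.mem_Rset_iff hα).mpr ⟨hγΔ, h⟩) hγnR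
          · exact h.symm
        have hsΔ : θ - γ ∈ R.Δ := R.theta_sub_mem hθ hγΔ hγnv
        have hsnv : nv θ (θ - γ) = 1 := by rw [nv_theta_sub R hθ, hγnv]; norm_num
        have hsα : 0 < R.coord (θ - γ) α := by
          rw [R.coord_theta_sub, hm, hγα0]; norm_num
        exact Finset.mem_filter.mpr ⟨(R.mem_Rset_iff hα).mpr ⟨hsΔ, hsα⟩, hsnv⟩
      · intro γ _; exact sub_sub_cancel θ γ
      · intro γ _; exact sub_sub_cancel θ γ
    have hsplit : P1.card = Q1.card + B.card := by
      have h1 := Finset.card_filter_add_card_filter_not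
        (s := P1) (p := fun γ => γ ∈ R.Rset α)
      have h2 : P1.filter (fun γ => γ ∈ R.Rset α) = Q1 := by
        ext γ
        simp only [hP1, hQ1, Finset.mem_filter]
        constructor
        · rintro ⟨⟨h3, h4⟩, h5⟩; exact ⟨h5, h4⟩
        · rintro ⟨h3, h4⟩; exact ⟨⟨hRsub h3, h4⟩, h3⟩
      have h3 : P1.filter (fun γ => ¬ γ ∈ R.Rset α) = B := rfl
      rw [h2, h3] at h1
      omega
    have hcard : (P1.card : ℝ) = 2 * (Q1.card : ℝ) := by
      rw [hsplit, ← hAB]; push_cast; ring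
    rw [hm, mul_one] at hqm
    rw [hqm]
    rw [hcard] at hP1card
    linarith
  -- the case m ≥ 2 : strict inequality
  have hcase2 : R.coord θ α ≠ 1 → (q : ℝ) ≤ D := by
    intro hm
    have hkm2 : 2 ≤ km := by
      rcases eq_or_lt_of_le hkm1 with h | h
      · exact absurd (by rw [hkm, ← h]; norm_num) hm
      · omega
    have hm2 : (2:ℝ) ≤ R.coord θ α := by rw [hkm]; exact_mod_cast hkm2
    nlinarith [Nat.cast_nonneg (α := ℝ) q]
  constructor
  · by_cases hm : R.coord θ α = 1
    · exact le_of_eq (hcase1 hm)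
    · linarith [hcase2 hm]
  · constructor
    · intro hqe
      by_contra hm
      have := hcase2 hm
      linarith
    · exact hcase1
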